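/- arXiv:2012.04762 — 2 statements merged into one kernel-verified Lean document; each statement's English description precedes it below -/
import Mathlib

section
/- Convex clustering is unitarily invariant: if Û is the unique minimizer over n×T real matrices of the convex clustering objective (1/2)‖U − X‖_F² + λ Σ_{i<j} w_{ij} ‖U_{i·} − U_{j·}‖₂ with data X, and Ψ is a T×T orthogonal matrix, then ÛΨ is the unique minimizer of the convex clustering objective (1/2)‖U − XΨ‖_F² + λ Σ_{i<j} w_{ij} ‖U_{i·} − U_{j·}‖₂ with data XΨ and the same weights. In particular, convex clustering of the wavelet coefficients XΨ without a sparsity penalty yields the same clustering solution (up to the transform) as clustering the time-domain data X directly. -/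
open Matrix
open scoped BigOperators

/-- Frobenius norm squared of a real matrix. -/
noncomputable def frobSq {α β : Type*} [Fintype α] [Fintype β] (A : Matrix α β ℝ) : ℝ :=
  ∑ i, ∑ j, (A i j) ^ 2

/-- Euclidean norm of a real vector. -/
noncomputable def vecNorm {α : Type*} [Fintype α] (v : α → ℝ) : ℝ :=
  Real.sqrt (∑ i, (v i) ^ 2)

/-- The convex clustering objective with data `X`:
`(1/2)‖U − X‖_F² + λ Σ_{i<j} w_{ij} ‖U_{i·} − U_{j·}‖₂`. -/
noncomputable def objCC {n T : ℕ} (lam : ℝ) (w : Fin n → Fin n → ℝ)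
    (X U : Matrix (Fin n) (Fin T) ℝ) : ℝ :=
  (1 / 2) * frobSq (U - X)
    + lam * ∑ i, ∑ j, (if i < j then w i j * vecNorm (fun t => U i t - U j t) else 0)

/-!
An orthogonal `Ψ` preserves Euclidean norms of rows, so `U ↦ UΨ` is a bijection of the matrices
carrying the objective with data `X` onto the objective with data `XΨ`. A bijection that
intertwines two objectives carries the (unique) minimizer of one to that of the other.
-/

lemma sum_sq_vecMul_of_mul_transpose_eq_one {β γ : Type*} [Fintype β] [Fintype γ] [DecidableEq β]
    {Ψ : Matrix β γ ℝ} (hΨ : Ψ * Ψᵀ = 1) (v : β → ℝ) :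
    ∑ t, (v ᵥ* Ψ) t ^ 2 = ∑ t, v t ^ 2 := by
  have hdot : (v ᵥ* Ψ) ⬝ᵥ (v ᵥ* Ψ) = v ⬝ᵥ v := by
    rw [← dotProduct_mulVec, ← vecMul_transpose, vecMul_vecMul, hΨ, vecMul_one]
  simpa only [dotProduct, sq] using hdot

lemma vecNorm_vecMul_of_mul_transpose_eq_one {β γ : Type*} [Fintype β] [Fintype γ]
    [DecidableEq β] {Ψ : Matrix β γ ℝ} (hΨ : Ψ * Ψᵀ = 1) (v : β → ℝ) :
    vecNorm (v ᵥ* Ψ) = vecNorm v := by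
  rw [vecNorm, vecNorm, sum_sq_vecMul_of_mul_transpose_eq_one hΨ]

lemma frobSq_mul_of_mul_transpose_eq_one {α β γ : Type*} [Fintype α] [Fintype β] [Fintype γ]
    [DecidableEq β] {Ψ : Matrix β γ ℝ} (hΨ : Ψ * Ψᵀ = 1) (A : Matrix α β ℝ) :
    frobSq (A * Ψ) = frobSq A := by
  unfold frobSq
  simp only [mul_apply_eq_vecMul, sum_sq_vecMul_of_mul_transpose_eq_one hΨ]

lemma objCC_mul_mul_of_mul_transpose_eq_one {n T T' : ℕ} (lam : ℝ) (w : Fin n → Fin n → ℝ)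
    {Ψ : Matrix (Fin T) (Fin T') ℝ} (hΨ : Ψ * Ψᵀ = 1) (X U : Matrix (Fin n) (Fin T) ℝ) :
    objCC lam w (X * Ψ) (U * Ψ) = objCC lam w X U := by
  have hrow : ∀ i j, (fun t => (U * Ψ) i t - (U * Ψ) j t) = (U i - U j) ᵥ* Ψ := fun i j => by
    ext t
    simp only [mul_apply_eq_vecMul, sub_vecMul, Pi.sub_apply]
  simp only [objCC, ← Matrix.sub_mul, frobSq_mul_of_mul_transpose_eq_one hΨ, hrow,
    vecNorm_vecMul_of_mul_transpose_eq_one hΨ]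
  rfl

lemma Equiv.unique_minimizer_transfer {α β γ : Type*} [Preorder γ] (e : α ≃ β)
    {f : α → γ} {g : β → γ} (hfg : ∀ a, g (e a) = f a) {a₀ : α}
    (hmin : ∀ a, f a₀ ≤ f a) (huniq : ∀ a, (∀ b, f a ≤ f b) → a = a₀) :
    (∀ b, g (e a₀) ≤ g b) ∧ (∀ b, (∀ c, g b ≤ g c) → b = e a₀) := by
  refine ⟨e.forall_congr_right.mp fun a => ?_, e.forall_congr_right.mp fun a ha => ?_⟩
  · simpa only [hfg] using hmin a
  · refine congrArg e (huniq a fun b => ?_)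
    simpa only [hfg] using ha (e b)

def Matrix.mulRightEquivOfTransposeMul {m T : Type*} [Fintype T] [DecidableEq T]
    {Ψ : Matrix T T ℝ} (hΨ : Ψᵀ * Ψ = 1) : Matrix m T ℝ ≃ Matrix m T ℝ where
  toFun U := U * Ψ
  invFun U := U * Ψᵀ
  left_inv U := by dsimp only; rw [Matrix.mul_assoc, mul_eq_one_comm.mp hΨ, Matrix.mul_one]
  right_inv U := by dsimp only; rw [Matrix.mul_assoc, hΨ, Matrix.mul_one]

theorem convex_clustering_unitarily_invariant_general
    {n T : ℕ} (lam : ℝ)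
    (w : Fin n → Fin n → ℝ)
    (X Uhat : Matrix (Fin n) (Fin T) ℝ)
    (Ψ : Matrix (Fin T) (Fin T) ℝ) (hΨ : Ψᵀ * Ψ = 1)
    (hmin : ∀ U, objCC lam w X Uhat ≤ objCC lam w X U)
    (huniq : ∀ U, (∀ V, objCC lam w X U ≤ objCC lam w X V) → U = Uhat) :
    (∀ U, objCC lam w (X * Ψ) (Uhat * Ψ) ≤ objCC lam w (X * Ψ) U)
    ∧ (∀ U, (∀ V, objCC lam w (X * Ψ) U ≤ objCC lam w (X * Ψ) V) → U = Uhat * Ψ) := by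
  have hΨ' : Ψ * Ψᵀ = 1 := mul_eq_one_comm.mp hΨ
  exact (Matrix.mulRightEquivOfTransposeMul hΨ).unique_minimizer_transfer
    (objCC_mul_mul_of_mul_transpose_eq_one lam w hΨ' X) hmin huniq

/-- Convex clustering is unitarily invariant: if `Û` is the unique minimizer of the convex
clustering objective with data `X` and `Ψ` is orthogonal, then `ÛΨ` is the unique minimizer
of the convex clustering objective with data `XΨ` and the same weights. -/
theorem convex_clustering_unitarily_invariant
    {n T : ℕ} (lam : ℝ) (hlam : 0 ≤ lam)
    (w : Fin n → Fin n → ℝ) (hw : ∀ i j, 0 ≤ w i j)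
    (X Uhat : Matrix (Fin n) (Fin T) ℝ)
    (Ψ : Matrix (Fin T) (Fin T) ℝ) (hΨ : Ψᵀ * Ψ = 1)
    (hmin : ∀ U, objCC lam w X Uhat ≤ objCC lam w X U)
    (huniq : ∀ U, (∀ V, objCC lam w X U ≤ objCC lam w X V) → U = Uhat) :
    (∀ U, objCC lam w (X * Ψ) (Uhat * Ψ) ≤ objCC lam w (X * Ψ) U)
    ∧ (∀ U, (∀ V, objCC lam w (X * Ψ) U ≤ objCC lam w (X * Ψ) V) → U = Uhat * Ψ) :=
  convex_clustering_unitarily_invariant_general lam w X Uhat Ψ hΨ hmin huniq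
end

section
/- Moreau decomposition for scaled norms: let E be a finite-dimensional real inner product space, N : E → ℝ a norm on E (N is nonnegative, positively homogeneous, subadditive, and N(y) = 0 only for y = 0), λ > 0, and x ∈ E. Let p be the unique minimizer over y ∈ E of λN(y) + (1/2)‖y − x‖². Then x − p lies in the closed convex set B* = { y ∈ E : ⟨y, z⟩ ≤ λN(z) for all z ∈ E }, and x − p is the metric projection of x onto B*, i.e., ‖x − (x − p)‖ ≤ ‖x − b‖ for every b ∈ B*. -/
open scoped RealInnerProductSpace

/-- Moreau decomposition for scaled norms: if `p` is the (unique) minimizer of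
`y ↦ λN(y) + (1/2)‖y − x‖²`, then `x − p` lies in the dual-norm ball
`B* = { y : ⟨y, z⟩ ≤ λN(z) for all z }` and is the metric projection of `x` onto `B*`. -/
theorem moreau_decomposition_scaled_norm
    {E : Type*} [NormedAddCommGroup E] [InnerProductSpace ℝ E] [FiniteDimensional ℝ E]
    (N : E → ℝ)
    (hN0 : ∀ y, 0 ≤ N y)
    (hNhom : ∀ (c : ℝ), 0 ≤ c → ∀ y, N (c • y) = c * N y)
    (hNsub : ∀ y z, N (y + z) ≤ N y + N z)
    (hNdef : ∀ y, N y = 0 → y = 0)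
    (lam : ℝ) (hlam : 0 < lam) (x p : E)
    (hp : ∀ y : E, lam * N p + (1 / 2) * ‖p - x‖ ^ 2 ≤ lam * N y + (1 / 2) * ‖y - x‖ ^ 2) :
    (x - p) ∈ {y : E | ∀ z, ⟪y, z⟫ ≤ lam * N z}
    ∧ ∀ b ∈ {y : E | ∀ z, ⟪y, z⟫ ≤ lam * N z}, ‖x - (x - p)‖ ≤ ‖x - b‖ := by
  have hN00 : N 0 = 0 := by
    have := hNhom 0 le_rfl 0
    simpa using this
  -- Part 1: x - p is in the dual ball
  have key : ∀ z : E, ⟪x - p, z⟫ ≤ lam * N z := by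
    intro z
    rcases eq_or_ne z 0 with rfl | hz
    · simp [hN00]
    · have hz2 : (0:ℝ) < ‖z‖ ^ 2 := pow_pos (norm_pos_iff.mpr hz) 2
      refine le_of_forall_pos_le_add ?_
      intro ε hε
      set t : ℝ := 2 * ε / ‖z‖ ^ 2 with ht
      have htpos : 0 < t := by positivity
      have h1 := hp (p + t • z)
      have hsub : N (p + t • z) ≤ N p + t * N z := by
        calc N (p + t • z) ≤ N p + N (t • z) := hNsub _ _
          _ = N p + t * N z := by rw [hNhom t htpos.le]
      have hexp : ‖p + t • z - x‖ ^ 2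
          = ‖p - x‖ ^ 2 + 2 * t * ⟪p - x, z⟫ + t ^ 2 * ‖z‖ ^ 2 := by
        have hrw : p + t • z - x = (p - x) + t • z := by abel
        rw [hrw, norm_add_sq_real, real_inner_smul_right, norm_smul]
        simp [mul_pow, abs_of_pos htpos]
        ring
      have hte : t * ‖z‖ ^ 2 = 2 * ε := by
        rw [ht]; exact div_mul_cancel₀ _ hz2.ne'
      have h2 : 0 ≤ t * (lam * N z + ⟪p - x, z⟫ + ε) := by
        nlinarith [h1, hexp, hte, mul_le_mul_of_nonneg_left hsub hlam.le,
          mul_pos htpos htpos]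
      have h3 : 0 ≤ lam * N z + ⟪p - x, z⟫ + ε := by
        nlinarith [h2, htpos]
      have hinner : ⟪x - p, z⟫ = -⟪p - x, z⟫ := by
        rw [← neg_sub p x, inner_neg_left]
      linarith [h3, hinner]
  -- Part 2: lam * N p ≤ ⟪x - p, p⟫
  have keyB : lam * N p ≤ ⟪x - p, p⟫ := by
    rcases eq_or_ne p 0 with rfl | hpne
    · simp [hN00]
    · have hp2 : (0:ℝ) < ‖p‖ ^ 2 := pow_pos (norm_pos_iff.mpr hpne) 2
      refine le_of_forall_pos_le_add ?_
      intro ε hε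
      set s : ℝ := min 1 (2 * ε / ‖p‖ ^ 2) with hs
      have hspos : 0 < s := lt_min one_pos (by positivity)
      have hsle1 : s ≤ 1 := min_le_left _ _
      have hsle : s * ‖p‖ ^ 2 ≤ 2 * ε := by
        have h := min_le_right 1 (2 * ε / ‖p‖ ^ 2)
        calc s * ‖p‖ ^ 2 ≤ (2 * ε / ‖p‖ ^ 2) * ‖p‖ ^ 2 :=
              mul_le_mul_of_nonneg_right h hp2.le
          _ = 2 * ε := by field_simp
      have h1 := hp ((1 - s) • p)
      have hhom : N ((1 - s) • p) = (1 - s) * N p :=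
        hNhom (1 - s) (by linarith) p
      have hexp : ‖(1 - s) • p - x‖ ^ 2
          = ‖p - x‖ ^ 2 - 2 * s * ⟪p - x, p⟫ + s ^ 2 * ‖p‖ ^ 2 := by
        have hrw : (1 - s) • p - x = (p - x) + (-s) • p := by
          rw [sub_smul, one_smul, neg_smul]; abel
        rw [hrw, norm_add_sq_real, real_inner_smul_right, norm_smul]
        simp [mul_pow, abs_of_pos hspos]
        ring
      have h2 : 0 ≤ s * (-(lam * N p) - ⟪p - x, p⟫ + ε) := by
        nlinarith [h1, hexp, hhom, hsle, hspos]
      have h3 : 0 ≤ -(lam * N p) - ⟪p - x, p⟫ + ε := by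
        nlinarith [h2, hspos]
      have hinner : ⟪x - p, p⟫ = -⟪p - x, p⟫ := by
        rw [← neg_sub p x, inner_neg_left]
      linarith [h3, hinner]
  refine ⟨key, ?_⟩
  intro b hb
  have hb1 : ⟪b, p⟫ ≤ lam * N p := hb p
  have hnn : (0:ℝ) ≤ ⟪p, (x - p) - b⟫ := by
    have h1 : ⟪p, x - p⟫ = ⟪x - p, p⟫ := real_inner_comm _ _
    have h2 : ⟪p, b⟫ = ⟪b, p⟫ := real_inner_comm _ _
    rw [inner_sub_right, h1, h2]
    linarith
  have hsq : ‖p‖ ^ 2 ≤ ‖x - b‖ ^ 2 := by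
    have hrw : x - b = p + ((x - p) - b) := by abel
    rw [hrw, norm_add_sq_real]
    nlinarith [sq_nonneg ‖(x - p) - b‖, norm_nonneg ((x - p) - b)]
  have : ‖x - (x - p)‖ = ‖p‖ := by
    congr 1; abel
  rw [this]
  nlinarith [norm_nonneg p, norm_nonneg (x - b), hsq]
end
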